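/- arXiv:1303.1777 — 2 statements merged into one kernel-verified Lean document; each statement's English description precedes it below -/
import Mathlib

section
/- Let k ≥ 1 and n ≥ 1 be natural numbers, let G_n = {(j₁/n, …, j_k/n) : jᵢ ∈ {0,1,…,n}} ⊂ [0,1]^k be the uniform grid with spacing 1/n, let ω be a modulus of continuity, and let R ≥ ω(√k/(2n)). Then for every reconstruction map g : (G_n → ℝ) → ([0,1]^k → ℝ), the worst-case uniform reconstruction error over the class U = {x ∈ X_ω : sup_t |x(t)| ≤ R} satisfies sup_{x ∈ U} sup_{τ ∈ [0,1]^k} |x(τ) − g(x|_{G_n})(τ)| ≥ ω(√k/(2n)). -/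
/-!
Let `τ = (1/(2n), …, 1/(2n))` be the centre of the corner cell of the grid and `δ = √k/(2n)`.
Each coordinate `j/n` of a grid point is at distance at least `1/(2n)` from `1/(2n)`, so every
grid point is at distance at least `δ` from `τ`. The bump `f t = max (ω δ - ω ‖t - τ‖) 0`
therefore vanishes on the grid, has `ω` as a modulus of continuity by subadditivity, and
`f τ = ω δ ≤ R`. Since `f` and `-f` have the same grid values, any reconstruction of the value
at `τ` is off by at least `ω δ` for one of them.
-/

noncomputable section

/-- The unit cube $[0,1]^k$ in $\mathbb{R}^k$ with the Euclidean norm. -/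
def cube (k : ℕ) : Set (EuclideanSpace ℝ (Fin k)) :=
  {t | ∀ i, t i ∈ Set.Icc (0:ℝ) 1}

/-- The uniform grid with spacing $1/n$ in the unit cube. -/
def grid (k n : ℕ) : Set (EuclideanSpace ℝ (Fin k)) :=
  {p | ∀ i, ∃ j : ℕ, j ≤ n ∧ p i = (j : ℝ) / n}

/-- A modulus of continuity: `ω : [0,∞) → [0,∞)`, `ω 0 = 0`, nondecreasing,
continuous and subadditive (all conditions on `[0,∞)`). -/
def IsModulus (ω : ℝ → ℝ) : Prop :=
  ω 0 = 0 ∧ (∀ h, 0 ≤ h → 0 ≤ ω h) ∧ (∀ a b, 0 ≤ a → a ≤ b → ω a ≤ ω b) ∧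
  ContinuousOn ω (Set.Ici 0) ∧ ∀ a b, 0 ≤ a → 0 ≤ b → ω (a + b) ≤ ω a + ω b

/-- Membership in the class `X_ω` of functions on the unit cube admitting `ω`
as a modulus of continuity (w.r.t. the Euclidean norm). -/
def MemXomega (k : ℕ) (ω : ℝ → ℝ) (x : EuclideanSpace ℝ (Fin k) → ℝ) : Prop :=
  ∀ t ∈ cube k, ∀ s ∈ cube k, |x t - x s| ≤ ω (dist t s)

namespace IsModulus

variable {ω : ℝ → ℝ}

theorem map_zero (hω : IsModulus ω) : ω 0 = 0 := hω.1

theorem nonneg (hω : IsModulus ω) {a : ℝ} (ha : 0 ≤ a) : 0 ≤ ω a := hω.2.1 a ha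

theorem mono (hω : IsModulus ω) {a b : ℝ} (ha : 0 ≤ a) (hab : a ≤ b) : ω a ≤ ω b :=
  hω.2.2.1 a b ha hab

theorem add_le (hω : IsModulus ω) {a b : ℝ} (ha : 0 ≤ a) (hb : 0 ≤ b) :
    ω (a + b) ≤ ω a + ω b :=
  hω.2.2.2.2 a b ha hb

theorem abs_sub_le (hω : IsModulus ω) {a b : ℝ} (ha : 0 ≤ a) (hb : 0 ≤ b) :
    |ω a - ω b| ≤ ω |a - b| := by
  wlog hba : b ≤ a generalizing a b
  · rw [abs_sub_comm, abs_sub_comm a]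
    exact this hb ha (le_of_not_ge hba)
  have hsplit : ω a ≤ ω b + ω (a - b) := by
    simpa using hω.add_le hb (sub_nonneg.2 hba)
  rw [abs_of_nonneg (sub_nonneg.2 (hω.mono hb hba)), abs_of_nonneg (sub_nonneg.2 hba)]
  linarith

end IsModulus

theorem MemXomega.neg {k : ℕ} {ω : ℝ → ℝ} {x : EuclideanSpace ℝ (Fin k) → ℝ}
    (hx : MemXomega k ω x) : MemXomega k ω (-x) := fun t ht s hs => by
  rw [Pi.neg_apply, Pi.neg_apply, neg_sub_neg, abs_sub_comm]
  exact hx t ht s hs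

def modulusBump {X : Type*} [PseudoMetricSpace X] (ω : ℝ → ℝ) (c : X) (r : ℝ) (t : X) : ℝ :=
  max (ω r - ω (dist t c)) 0

section modulusBump

variable {X : Type*} [PseudoMetricSpace X] {ω : ℝ → ℝ} {c : X} {r : ℝ}

theorem IsModulus.abs_modulusBump_sub_le (hω : IsModulus ω) (t s : X) :
    |modulusBump ω c r t - modulusBump ω c r s| ≤ ω (dist t s) :=
  calc |modulusBump ω c r t - modulusBump ω c r s|
      ≤ |(ω r - ω (dist t c)) - (ω r - ω (dist s c))| := abs_max_sub_max_le_abs _ _ _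
    _ = |ω (dist s c) - ω (dist t c)| := by ring_nf
    _ ≤ ω |dist s c - dist t c| := hω.abs_sub_le dist_nonneg dist_nonneg
    _ ≤ ω (dist t s) := hω.mono (abs_nonneg _) (by
        rw [abs_sub_comm]; exact abs_dist_sub_le t s c)

theorem IsModulus.abs_modulusBump_le (hω : IsModulus ω) (hr : 0 ≤ r) (t : X) :
    |modulusBump ω c r t| ≤ ω r := by
  rw [modulusBump, abs_of_nonneg (le_max_right _ _)]
  exact max_le (by linarith [hω.nonneg (dist_nonneg (x := t) (y := c))]) (hω.nonneg hr)

theorem IsModulus.modulusBump_self (hω : IsModulus ω) (hr : 0 ≤ r) :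
    modulusBump ω c r c = ω r := by
  rw [modulusBump, dist_self, hω.map_zero, sub_zero, max_eq_left (hω.nonneg hr)]

theorem IsModulus.modulusBump_eq_zero_of_le_dist (hω : IsModulus ω) (hr : 0 ≤ r) {t : X}
    (ht : r ≤ dist t c) :
    modulusBump ω c r t = 0 :=
  max_eq_right (sub_nonpos.2 (hω.mono hr ht))

end modulusBump

theorem EuclideanSpace.sqrt_card_mul_le_dist {ι : Type*} [Fintype ι]
    {p q : EuclideanSpace ℝ ι} {a : ℝ} (ha : 0 ≤ a) (h : ∀ i, a ≤ |p i - q i|) :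
    √(Fintype.card ι) * a ≤ dist p q := by
  rw [EuclideanSpace.dist_eq, ← Real.sqrt_sq ha, ← Real.sqrt_mul (Nat.cast_nonneg _)]
  refine Real.sqrt_le_sqrt ?_
  calc (Fintype.card ι : ℝ) * a ^ 2 = ∑ _i : ι, a ^ 2 := by simp
    _ ≤ ∑ i, dist (p i) (q i) ^ 2 := Finset.sum_le_sum fun i _ => by
        rw [Real.dist_eq]; exact pow_le_pow_left₀ ha (h i) 2

theorem one_div_two_mul_le_abs_natCast_div_sub (j n : ℕ) :
    1 / (2 * n : ℝ) ≤ |(j : ℝ) / n - 1 / (2 * n)| := by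
  have hodd : 1 ≤ |2 * (j : ℝ) - 1| := by
    rcases j.eq_zero_or_pos with rfl | hj
    · norm_num
    · have : (1 : ℝ) ≤ j := by exact_mod_cast hj
      exact le_abs.2 (Or.inl (by linarith))
  rw [show (j : ℝ) / n - 1 / (2 * n) = (2 * j - 1) / (2 * n) by ring, abs_div,
    abs_of_nonneg (by positivity : (0 : ℝ) ≤ 2 * n)]
  exact div_le_div_of_nonneg_right hodd (by positivity)

def cornerCellCenter (k n : ℕ) : EuclideanSpace ℝ (Fin k) :=
  WithLp.toLp 2 fun _ => 1 / (2 * n)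

@[simp]
theorem cornerCellCenter_apply (k n : ℕ) (i : Fin k) : cornerCellCenter k n i = 1 / (2 * n) := rfl

theorem cornerCellCenter_mem_cube (k n : ℕ) : cornerCellCenter k n ∈ cube k := fun i => by
  rw [cornerCellCenter_apply]
  exact ⟨by positivity, by simpa using Nat.cast_inv_le_one (α := ℝ) (2 * n)⟩

theorem le_dist_cornerCellCenter {k n : ℕ} {p : EuclideanSpace ℝ (Fin k)}
    (hp : p ∈ grid k n) :
    √k / (2 * n) ≤ dist p (cornerCellCenter k n) := by
  have h := EuclideanSpace.sqrt_card_mul_le_dist (p := p) (q := cornerCellCenter k n)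
    (a := 1 / (2 * (n : ℝ))) (by positivity) fun i => by
      obtain ⟨j, -, hj⟩ := hp i
      rw [hj, cornerCellCenter_apply]
      exact one_div_two_mul_le_abs_natCast_div_sub j n
  rwa [Fintype.card_fin, mul_one_div] at h

theorem ofReal_abs_le_iSup_reconstruction_error {X : Type*} {S T : Set X}
    {P : (X → ℝ) → Prop} (hP : ∀ x, P x → P (-x)) (g : (S → ℝ) → X → ℝ) {f : X → ℝ}
    (hf : P f) (hfS : ∀ p ∈ S, f p = 0) {τ : X} (hτ : τ ∈ T) :
    ENNReal.ofReal |f τ| ≤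
      ⨆ x : {x // P x}, ⨆ t : T, ENNReal.ofReal |x.1 t.1 - g (fun p => x.1 p.1) t.1| := by
  have hsame : (fun p : S => (-f) p.1) = fun p => f p.1 := funext fun p => by
    simp [hfS p.1 p.2]
  set c := g (fun p => f p.1) τ
  have hsplit : |f τ| ≤ max |f τ - c| |-f τ - c| := by
    have h2 : |2 * f τ| ≤ |f τ - c| + |-f τ - c| := by
      have hdiff : f τ - c - (-f τ - c) = 2 * f τ := by ring
      simpa only [hdiff] using abs_sub (f τ - c) (-f τ - c)
    rw [abs_mul, abs_two] at h2
    linarith [le_max_left |f τ - c| |-f τ - c|, le_max_right |f τ - c| |-f τ - c|]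
  have herr : ∀ x : {x // P x}, ENNReal.ofReal |x.1 τ - g (fun p => x.1 p.1) τ| ≤
      ⨆ x : {x // P x}, ⨆ t : T, ENNReal.ofReal |x.1 t.1 - g (fun p => x.1 p.1) t.1| :=
    fun x => le_iSup_of_le x (le_iSup_of_le ⟨τ, hτ⟩ le_rfl)
  rcases le_max_iff.1 hsplit with h | h
  · exact (ENNReal.ofReal_le_ofReal h).trans (herr ⟨f, hf⟩)
  · have hneg := herr ⟨-f, hP f hf⟩
    rw [hsame] at hneg
    exact (ENNReal.ofReal_le_ofReal h).trans hneg

theorem reconstruction_error_lower_bound_general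
    (k n : ℕ)
    (ω : ℝ → ℝ) (hω : IsModulus ω)
    (R : ℝ) (hR : ω (Real.sqrt k / (2 * n)) ≤ R) :
    ∀ g : (↥(grid k n) → ℝ) → (EuclideanSpace ℝ (Fin k) → ℝ),
      ENNReal.ofReal (ω (Real.sqrt k / (2 * n))) ≤
        ⨆ x : {x : EuclideanSpace ℝ (Fin k) → ℝ //
                MemXomega k ω x ∧ ∀ t ∈ cube k, |x t| ≤ R},
        ⨆ τ : cube k,
          ENNReal.ofReal |x.1 τ.1 - g (fun p => x.1 p.1) τ.1| := by
  intro g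
  set δ := √k / (2 * n)
  have hδ : 0 ≤ δ := by positivity
  set f := modulusBump ω (cornerCellCenter k n) δ
  have hf : MemXomega k ω f ∧ ∀ t ∈ cube k, |f t| ≤ R :=
    ⟨fun t _ s _ => hω.abs_modulusBump_sub_le t s,
      fun t _ => (hω.abs_modulusBump_le hδ t).trans hR⟩
  have key := ofReal_abs_le_iSup_reconstruction_error
    (P := fun x => MemXomega k ω x ∧ ∀ t ∈ cube k, |x t| ≤ R)
    (fun x hx => ⟨hx.1.neg, by simpa using hx.2⟩) g hf
    (fun p hp => hω.modulusBump_eq_zero_of_le_dist hδ (le_dist_cornerCellCenter hp))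
    (cornerCellCenter_mem_cube k n)
  rwa [show f (cornerCellCenter k n) = ω δ from hω.modulusBump_self hδ,
    abs_of_nonneg (hω.nonneg hδ)] at key

/-- (Lower bound.) For every reconstruction map `g` from grid
values on `G_n`, the worst-case uniform reconstruction error over the bounded
class `U = {x ∈ X_ω : sup |x| ≤ R}` (where `R ≥ ω(√k/(2n))`) is at least
`ω(√k/(2n))`. -/
theorem reconstruction_error_lower_bound
    (k n : ℕ) (hk : 1 ≤ k) (hn : 1 ≤ n)
    (ω : ℝ → ℝ) (hω : IsModulus ω)
    (R : ℝ) (hR : ω (Real.sqrt k / (2 * n)) ≤ R) :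
    ∀ g : (↥(grid k n) → ℝ) → (EuclideanSpace ℝ (Fin k) → ℝ),
      ENNReal.ofReal (ω (Real.sqrt k / (2 * n))) ≤
        ⨆ x : {x : EuclideanSpace ℝ (Fin k) → ℝ //
                MemXomega k ω x ∧ ∀ t ∈ cube k, |x t| ≤ R},
        ⨆ τ : cube k,
          ENNReal.ofReal |x.1 τ.1 - g (fun p => x.1 p.1) τ.1| :=
  reconstruction_error_lower_bound_general k n ω hω R hR
end
end

section
/- Let k ≥ 1 and n ≥ 1 be natural numbers, let G_n = {(j₁/n, …, j_k/n) : jᵢ ∈ {0,1,…,n}} ⊂ [0,1]^k be the uniform grid with spacing 1/n, and let ω be a modulus of continuity. Then there exists a reconstruction map g : (G_n → ℝ) → ([0,1]^k → ℝ) such that for every x ∈ X_ω, sup_{τ ∈ [0,1]^k} |x(τ) − g(x|_{G_n})(τ)| ≤ ω(√k/(2n)). -/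
noncomputable section

/-!
Send each point of the cube to a nearest grid point, rounding every coordinate to the
nearest multiple of `1/n`, and let `g` read off the sampled value there. Each coordinate
moves by at most `1/(2n)`, so the point moves by at most `√k/(2n)` in the Euclidean norm,
and the modulus of continuity bounds the error by `ω(√k/(2n))`.
-/

theorem EuclideanSpace.dist_le_sqrt_card_mul {ι : Type*} [Fintype ι]
    (x y : EuclideanSpace ℝ ι) {δ : ℝ} (hδ : 0 ≤ δ) (h : ∀ i, dist (x i) (y i) ≤ δ) :
    dist x y ≤ √(Fintype.card ι) * δ := by
  calc dist x y = √(∑ i, dist (x i) (y i) ^ 2) := EuclideanSpace.dist_eq x y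
    _ ≤ √(∑ _ : ι, δ ^ 2) := by gcongr with i; exact h i
    _ = √(Fintype.card ι) * δ := by
      rw [Finset.sum_const, Finset.card_univ, nsmul_eq_mul, Real.sqrt_mul (Nat.cast_nonneg _),
        Real.sqrt_sq hδ]

theorem abs_sub_floor_add_half_le {s : ℝ} (hs : 0 ≤ s) : |s - ⌊s + 1 / 2⌋₊| ≤ 1 / 2 := by
  have hle : (⌊s + 1 / 2⌋₊ : ℝ) ≤ s + 1 / 2 := Nat.floor_le (by positivity)
  have hlt : s + 1 / 2 < ⌊s + 1 / 2⌋₊ + 1 := Nat.lt_floor_add_one _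
  rw [abs_le]
  constructor <;> linarith

/-- The index `j ≤ n` of a multiple `j / n` nearest to `t`, when `t ∈ [0, 1]`. -/
def nearestGridIndex (n : ℕ) (t : ℝ) : ℕ :=
  min n ⌊t * n + 1 / 2⌋₊

theorem abs_sub_nearestGridIndex_div_le {n : ℕ} (hn : 1 ≤ n) {t : ℝ} (ht : t ∈ Set.Icc (0 : ℝ) 1) :
    |t - nearestGridIndex n t / n| ≤ 1 / (2 * n) := by
  have hn0 : (0 : ℝ) < n := by exact_mod_cast hn
  have htn : 0 ≤ t * n := mul_nonneg ht.1 hn0.le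
  have hfloor : ⌊t * n + 1 / 2⌋₊ ≤ n := by
    refine Nat.lt_succ_iff.mp ((Nat.floor_lt (by positivity)).mpr ?_)
    push_cast
    nlinarith [ht.2]
  have hscaled := abs_sub_floor_add_half_le htn
  rw [nearestGridIndex, min_eq_right hfloor]
  calc |t - ⌊t * n + 1 / 2⌋₊ / n| = |t * n - ⌊t * n + 1 / 2⌋₊| / n := by
        rw [← abs_of_pos hn0, ← abs_div, abs_of_pos hn0, sub_div, mul_div_cancel_right₀ _ hn0.ne']
    _ ≤ 1 / 2 / n := by gcongr
    _ = 1 / (2 * n) := by rw [div_div]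

def nearestGridPoint (k n : ℕ) (τ : EuclideanSpace ℝ (Fin k)) : EuclideanSpace ℝ (Fin k) :=
  WithLp.toLp 2 fun i => (nearestGridIndex n (τ i) : ℝ) / n

theorem nearestGridPoint_mem_grid (k n : ℕ) (τ : EuclideanSpace ℝ (Fin k)) :
    nearestGridPoint k n τ ∈ grid k n :=
  fun i => ⟨nearestGridIndex n (τ i), min_le_left _ _, rfl⟩

theorem nearestGridPoint_mem_cube (k n : ℕ) (τ : EuclideanSpace ℝ (Fin k)) :
    nearestGridPoint k n τ ∈ cube k :=
  fun i => ⟨div_nonneg (Nat.cast_nonneg _) (Nat.cast_nonneg n),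
    div_le_one_of_le₀ (by exact_mod_cast min_le_left _ _) (Nat.cast_nonneg n)⟩

theorem dist_nearestGridPoint_le {k n : ℕ} (hn : 1 ≤ n) {τ : EuclideanSpace ℝ (Fin k)}
    (hτ : τ ∈ cube k) : dist τ (nearestGridPoint k n τ) ≤ √k / (2 * n) := by
  calc dist τ (nearestGridPoint k n τ) ≤ √(Fintype.card (Fin k)) * (1 / (2 * n)) :=
        EuclideanSpace.dist_le_sqrt_card_mul _ _ (by positivity)
          fun i => abs_sub_nearestGridIndex_div_le hn (hτ i)
    _ = √k / (2 * n) := by rw [Fintype.card_fin, mul_one_div]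

theorem reconstruction_error_upper_bound_general
    (k n : ℕ) (hn : 1 ≤ n)
    (ω : ℝ → ℝ) (hω : IsModulus ω) :
    ∃ g : (↥(grid k n) → ℝ) → (EuclideanSpace ℝ (Fin k) → ℝ),
      ∀ x : EuclideanSpace ℝ (Fin k) → ℝ, MemXomega k ω x →
        (⨆ τ : cube k, |x τ.1 - g (fun p => x p.1) τ.1|)
          ≤ ω (Real.sqrt k / (2 * n)) := by
  obtain ⟨-, -, hmono, -, -⟩ := hω
  refine ⟨fun v τ => v ⟨nearestGridPoint k n τ, nearestGridPoint_mem_grid k n τ⟩, fun x hx => ?_⟩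
  have : Nonempty (cube k) := ⟨⟨0, fun _ => ⟨le_rfl, zero_le_one⟩⟩⟩
  refine ciSup_le fun ⟨τ, hτ⟩ => ?_
  calc |x τ - x (nearestGridPoint k n τ)|
      ≤ ω (dist τ (nearestGridPoint k n τ)) := hx τ hτ _ (nearestGridPoint_mem_cube k n τ)
    _ ≤ ω (√k / (2 * n)) := hmono _ _ dist_nonneg (dist_nearestGridPoint_le hn hτ)

/-- (Upper bound.) There exists a reconstruction map `g` from
grid values on `G_n` such that every `x ∈ X_ω` is recovered with uniform error
at most `ω(√k/(2n))`. -/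
theorem reconstruction_error_upper_bound
    (k n : ℕ) (hk : 1 ≤ k) (hn : 1 ≤ n)
    (ω : ℝ → ℝ) (hω : IsModulus ω) :
    ∃ g : (↥(grid k n) → ℝ) → (EuclideanSpace ℝ (Fin k) → ℝ),
      ∀ x : EuclideanSpace ℝ (Fin k) → ℝ, MemXomega k ω x →
        (⨆ τ : cube k, |x τ.1 - g (fun p => x p.1) τ.1|)
          ≤ ω (Real.sqrt k / (2 * n)) :=
  reconstruction_error_upper_bound_general k n hn ω hω
end
end
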